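/- Let α, β ∈ ℝ∖{0} satisfy α^k β^l ≠ ±1 for all integers (k,l) ≠ (0,0), and let ρ : F₂ → GL(2,ℝ) be given by ρ(a) = [[α,0],[0,α⁻¹]], ρ(b) = [[β,1],[0,β⁻¹]]. Then for every word w of the form a^{±1}, a^{±2}, b^{±1}, a b^{-1} a^{-1} b^{-1}, a b^n, or a b^n a b^n (n ∈ ℤ), and every nonzero integer m, ρ(w^m) is not a scalar matrix. -/

import Mathlib

/-- The class of words of `F₂ = ⟨a,b⟩` representing simple closed curves on the
punctured Klein bottle (here `a = of 0`, `b = of 1`):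
`a^{±1}, a^{±2}, b^{±1}, ab⁻¹a⁻¹b⁻¹, ab^n, ab^n a b^n (n ∈ ℤ)`. -/
def SccWord (w : FreeGroup (Fin 2)) : Prop :=
  let a : FreeGroup (Fin 2) := FreeGroup.of 0
  let b : FreeGroup (Fin 2) := FreeGroup.of 1
  w = a ∨ w = a⁻¹ ∨ w = a ^ 2 ∨ w = a⁻¹ ^ 2 ∨ w = b ∨ w = b⁻¹ ∨
    w = a * b⁻¹ * a⁻¹ * b⁻¹ ∨
    (∃ n : ℤ, w = a * b ^ n ∨ w = a * b ^ n * a * b ^ n)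

/-!
Every generator image is upper triangular, so `e₀ = (1, 0)` is a common eigenvector of the
image of `ρ`, and its eigenvalue is the character `χ : F₂ → ℝˣ`, `a ↦ α`, `b ↦ β`; thus
`χ w = α^k β^l` with `(k, l)` the exponent sums of `w`, which are not both zero for the listed
words. If `ρ(w^m) = c • 1`, then `c = χ(w^m) = α^{km} β^{lm}`, and since the generators have
determinant `1`, also `c² = det ρ(w^m) = 1`, contradicting the hypothesis on `α, β`.
-/

open scoped Matrix

section Eigenvector

open Matrix

variable {ι n K : Type*} [Fintype n] [DecidableEq n] [CommRing K]

lemma Matrix.GeneralLinearGroup.inv_mulVec_eq_smul {A : GL n K} {v : n → K} {c : Kˣ}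
    (hA : (A : Matrix n n K) *ᵥ v = (c : K) • v) :
    ((A⁻¹ : GL n K) : Matrix n n K) *ᵥ v = ((c⁻¹ : Kˣ) : K) • v := by
  calc ((A⁻¹ : GL n K) : Matrix n n K) *ᵥ v
      = ((c⁻¹ : Kˣ) : K) • ((A⁻¹ : GL n K) : Matrix n n K) *ᵥ ((c : K) • v) := by
        rw [mulVec_smul, smul_smul, Units.inv_mul, one_smul]
    _ = ((c⁻¹ : Kˣ) : K) • v := by
        rw [← hA, mulVec_mulVec, ← Units.val_mul, inv_mul_cancel, Units.val_one, one_mulVec]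

lemma FreeGroup.mulVec_eq_smul_of_forall_of (ρ : FreeGroup ι →* GL n K)
    (χ : FreeGroup ι →* Kˣ) {v : n → K}
    (hof : ∀ i, (ρ (of i) : Matrix n n K) *ᵥ v = (χ (of i) : K) • v) (g : FreeGroup ι) :
    (ρ g : Matrix n n K) *ᵥ v = (χ g : K) • v := by
  induction g using FreeGroup.induction_on with
  | C1 => simp
  | of i => exact hof i
  | inv_of i _ =>
    rw [_root_.map_inv, _root_.map_inv]
    exact GeneralLinearGroup.inv_mulVec_eq_smul (hof i)
  | mul x y hx hy =>
    rw [_root_.map_mul, _root_.map_mul, Units.val_mul, ← mulVec_mulVec, hy, mulVec_smul, hx,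
      smul_smul, Units.val_mul, mul_comm]

end Eigenvector

open Matrix in
lemma Matrix.eq_one_or_neg_one_of_det_smul_one {K : Type*} [CommRing K] [NoZeroDivisors K]
    {c : K}
    (hdet : (c • (1 : Matrix (Fin 2) (Fin 2) K)).det = 1) : c = 1 ∨ c = -1 := by
  rw [det_smul, det_one, Fintype.card_fin, mul_one] at hdet
  exact sq_eq_one_iff.mp hdet

lemma SccWord.exists_exponentSum {w : FreeGroup (Fin 2)} (hw : SccWord w) :
    ∃ k l : ℤ, (k, l) ≠ (0, 0) ∧ ∀ {M : Type} [CommGroup M] (χ : FreeGroup (Fin 2) →* M),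
      χ w = χ (FreeGroup.of 0) ^ k * χ (FreeGroup.of 1) ^ l := by
  obtain rfl | rfl | rfl | rfl | rfl | rfl | rfl | ⟨n, rfl | rfl⟩ := hw
  · exact ⟨1, 0, by simp, fun χ => by simp⟩
  · exact ⟨-1, 0, by simp, fun χ => by simp⟩
  · exact ⟨2, 0, by simp, fun χ => by simp⟩
  · exact ⟨-2, 0, by simp, fun χ => by simp⟩
  · exact ⟨0, 1, by simp, fun χ => by simp⟩
  · exact ⟨0, -1, by simp, fun χ => by simp⟩
  · exact ⟨0, -2, by simp, fun χ => by simp [sq]⟩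
  · exact ⟨1, n, by simp, fun χ => by simp⟩
  · refine ⟨2, 2 * n, by simp, fun χ => ?_⟩
    simp only [map_mul, map_zpow]
    rw [zpow_mul', zpow_two, zpow_two, mul_mul_mul_comm, ← mul_assoc]

/-- If `α^k β^l ≠ ±1` for all `(k,l) ≠ (0,0)`, then for every word `w` representing a
simple closed curve on the punctured Klein bottle and every nonzero integer `m`,
`ρ(w^m)` is not a scalar matrix. -/
theorem stmt_9 (α β : ℝ) (hα : α ≠ 0) (hβ : β ≠ 0)
    (h : ∀ k l : ℤ, ¬ (k = 0 ∧ l = 0) → α ^ k * β ^ l ≠ 1 ∧ α ^ k * β ^ l ≠ -1)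
    (ρ : FreeGroup (Fin 2) →* Matrix.GeneralLinearGroup (Fin 2) ℝ)
    (ha : (ρ (FreeGroup.of 0) : Matrix (Fin 2) (Fin 2) ℝ) = !![α, 0; 0, α⁻¹])
    (hb : (ρ (FreeGroup.of 1) : Matrix (Fin 2) (Fin 2) ℝ) = !![β, 1; 0, β⁻¹])
    (w : FreeGroup (Fin 2)) (hw : SccWord w) (m : ℤ) (hm : m ≠ 0) :
    ¬ ∃ c : ℝ, (ρ (w ^ m) : Matrix (Fin 2) (Fin 2) ℝ) = c • (1 : Matrix (Fin 2) (Fin 2) ℝ) := by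
  rintro ⟨c, hc⟩
  let χ : FreeGroup (Fin 2) →* ℝˣ := FreeGroup.lift ![Units.mk0 α hα, Units.mk0 β hβ]
  have hχ : ∀ g, (ρ g : Matrix (Fin 2) (Fin 2) ℝ) *ᵥ Pi.single 0 1 = (χ g : ℝ) • Pi.single 0 1 :=
    FreeGroup.mulVec_eq_smul_of_forall_of ρ χ fun i => by
      fin_cases i <;> ext j <;> fin_cases j <;> simp [χ, ha, hb, Matrix.mulVec, dotProduct]
  have hdet : Matrix.GeneralLinearGroup.det.comp ρ = 1 := by
    ext i : 1
    fin_cases i <;> ext <;> simp [ha, hb, Matrix.det_fin_two, hα, hβ]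
  have hc_eq : c = χ (w ^ m) := by
    have := congrFun (hχ (w ^ m)) 0
    rw [hc] at this
    simpa using this
  have hc_sq : c = 1 ∨ c = -1 := by
    refine Matrix.eq_one_or_neg_one_of_det_smul_one ?_
    have := congrArg Units.val (DFunLike.congr_fun hdet (w ^ m))
    rwa [MonoidHom.comp_apply, Matrix.GeneralLinearGroup.val_det_apply, hc] at this
  obtain ⟨k, l, hkl, hχw⟩ := hw.exists_exponentSum
  have hχwm : (χ (w ^ m) : ℝ) = α ^ (k * m) * β ^ (l * m) := by
    simp [map_zpow, hχw χ, χ, mul_zpow, zpow_mul]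
  have hkml : ¬ (k * m = 0 ∧ l * m = 0) := by
    simp only [mul_eq_zero, hm, or_false]
    simpa using hkl
  obtain ⟨hne_one, hne_neg_one⟩ := h (k * m) (l * m) hkml
  rw [hc_eq, hχwm] at hc_sq
  exact hc_sq.elim hne_one hne_neg_one
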